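/- There exists a 5-chromatic tournament on 19 vertices: the tournament D obtained from Pal_7 by blowing up each of the vertices 1,...,6 into a directed triangle is not 4-colorable. -/

import Mathlib

def IsTournament {V : Type*} (r : V → V → Prop) : Prop :=
  (∀ v, ¬ r v v) ∧ ∀ u v : V, u ≠ v → (r u v ↔ ¬ r v u)

def TransOn {V : Type*} (r : V → V → Prop) (S : Set V) : Prop :=
  ∀ a ∈ S, ∀ b ∈ S, ∀ c ∈ S, r a b → r b c → r a c

def Colorable {V : Type*} (r : V → V → Prop) (k : ℕ) : Prop :=
  ∃ f : V → Fin k, ∀ c : Fin k, TransOn r {v | f v = c}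

def pal7 (i j : ZMod 7) : Prop := i - j = 1 ∨ i - j = 2 ∨ i - j = 4

/-- Vertices of the blow-up: `none` is vertex 0 of `Pal₇`, and `some (i, m)`
is the `m`-th copy of vertex `i + 1` of `Pal₇`. -/
def DV : Type := Option (Fin 6 × ZMod 3)

instance : Fintype DV := instFintypeOption

/-- The vertex of `Pal₇` that a vertex of the blow-up comes from. -/
def proj : DV → ZMod 7
  | none => 0
  | some (i, _) => (i : ℕ) + 1

/-- Arcs of the blow-up: between copies of distinct `Pal₇`-vertices follow `Pal₇`,
and each triple of copies of one vertex forms a directed triangle. -/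
def Darc (u v : DV) : Prop :=
  match u, v with
  | none, none => False
  | none, some (k, _) => pal7 0 ((k : ℕ) + 1)
  | some (i, _), none => pal7 ((i : ℕ) + 1) 0
  | some (i, m), some (k, l) =>
      if i = k then l = m + 1 else pal7 ((i : ℕ) + 1) ((k : ℕ) + 1)

/-!
A transitive subtournament of `Pal₇` has at most three vertices, and a transitive colour class
of `D` projects onto a transitive subtournament of `Pal₇`; so each of four colours is seen on at
most three vertices of `Pal₇`, twelve incidences in all. On the other hand each directed triangle
needs two colours and vertex `0` one, which forces at least `2 · 6 + 1 = 13` incidences.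
-/

open Finset

instance : DecidableRel pal7 := fun i j => by unfold pal7; infer_instance

instance : DecidableEq DV := fun a b => by unfold DV at a b ⊢; infer_instance

instance : DecidableRel Darc := fun u v => by
  rcases u with _ | ⟨i, m⟩ <;> rcases v with _ | ⟨k, l⟩ <;> simp only [Darc] <;> infer_instance

section Coloring

variable {V W κ : Type*}

theorem TransOn.image {r : V → V → Prop} {s : W → W → Prop} {p : V → W} {S : Set V}
    (hirr : ∀ w, ¬ s w w) (hasymm : ∀ w w', s w w' → ¬ s w' w)
    (hp : ∀ u v, p u ≠ p v → (r u v ↔ s (p u) (p v))) (hS : TransOn r S) :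
    TransOn s (p '' S) := by
  rintro _ ⟨u, hu, rfl⟩ _ ⟨v, hv, rfl⟩ _ ⟨w, hw, rfl⟩ huv hvw
  have huv' : p u ≠ p v := fun h => hirr _ (h ▸ huv)
  have hvw' : p v ≠ p w := fun h => hirr _ (h ▸ hvw)
  have huw' : p u ≠ p w := fun h => hasymm _ _ huv (h ▸ hvw)
  exact (hp u w huw').1 (hS u hu v hv w hw ((hp u v huv').2 huv) ((hp v w hvw').2 hvw))

theorem ne_or_ne_of_transOn_fibers {r : V → V → Prop} {f : V → κ}
    (hf : ∀ c, TransOn r {v | f v = c}) {a b c : V} (hab : r a b) (hbc : r b c) (hac : ¬ r a c) :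
    f a ≠ f b ∨ f b ≠ f c := by
  by_contra! h
  exact hac (hf (f a) a rfl b h.1.symm c (h.1.trans h.2).symm hab hbc)

theorem sum_card_image_fiber_comm [Fintype V] [Fintype W] [Fintype κ] [DecidableEq W]
    [DecidableEq κ] (f : V → κ) (p : V → W) :
    ∑ w, #(image f {v | p v = w}) = ∑ c, #(image p {v | f v = c}) := by
  convert sum_card_bipartiteAbove_eq_sum_card_bipartiteBelow (s := univ) (t := univ)
    (r := fun w c => ∃ v, p v = w ∧ f v = c) using 3 <;>
  · ext
    simp [bipartiteAbove, bipartiteBelow, and_comm]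

end Coloring

theorem pal7_irrefl : ∀ i, ¬ pal7 i i := by decide

theorem pal7_asymm : ∀ i j, pal7 i j → ¬ pal7 j i := by decide

set_option maxRecDepth 10000 in
theorem card_le_three_of_transOn_pal7 (S : Finset (ZMod 7)) (hS : TransOn pal7 (S : Set (ZMod 7))) :
    #S ≤ 3 := by
  simp only [TransOn, mem_coe] at hS
  revert S
  decide

set_option maxRecDepth 10000 in
theorem darc_iff_pal7 : ∀ u v, proj u ≠ proj v → (Darc u v ↔ pal7 (proj u) (proj v)) := by
  decide

theorem darc_triangle (i : Fin 6) : Darc (some (i, 0)) (some (i, 1)) ∧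
    Darc (some (i, 1)) (some (i, 2)) ∧ ¬ Darc (some (i, 0)) (some (i, 2)) := by
  simp only [Darc, if_true]
  decide

theorem exists_proj_eq : ∀ w : ZMod 7, w ≠ 0 → ∃ i : Fin 6, proj (some (i, 0)) = w := by
  decide

theorem isTournament_darc : IsTournament Darc := by
  unfold IsTournament
  decide

section ColorClasses

variable {k : ℕ} {f : DV → Fin k} (hf : ∀ c, TransOn Darc {v | f v = c})
include hf

theorem card_image_proj_color_class_le (c : Fin k) : #(image proj {v | f v = c}) ≤ 3 := by
  apply card_le_three_of_transOn_pal7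
  rw [coe_image, coe_filter_univ]
  exact (hf c).image pal7_irrefl pal7_asymm darc_iff_pal7

theorem card_colors_on_fiber_ge (w : ZMod 7) :
    (if w = 0 then 1 else 2) ≤ #(image f {v | proj v = w}) := by
  split_ifs with hw
  · exact card_pos.2 ⟨f none, mem_image.2 ⟨none, (mem_filter_univ _).2 hw.symm, rfl⟩⟩
  · obtain ⟨i, rfl⟩ := exists_proj_eq w hw
    have mem (m : ZMod 3) : f (some (i, m)) ∈ image f {v | proj v = proj (some (i, 0))} :=
      mem_image_of_mem f ((mem_filter_univ _).2 rfl)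
    obtain ⟨h01, h12, h02⟩ := darc_triangle i
    rcases ne_or_ne_of_transOn_fibers hf h01 h12 h02 with hne | hne
    · exact one_lt_card.2 ⟨_, mem 0, _, mem 1, hne⟩
    · exact one_lt_card.2 ⟨_, mem 1, _, mem 2, hne⟩

end ColorClasses

theorem not_colorable_darc_four : ¬ Colorable Darc 4 := by
  rintro ⟨f, hf⟩
  have lower : ∑ w : ZMod 7, (if w = 0 then 1 else 2) ≤ ∑ w, #(image f {v | proj v = w}) :=
    sum_le_sum fun w _ => card_colors_on_fiber_ge hf w
  have upper : ∑ c : Fin 4, #(image proj {v | f v = c}) ≤ ∑ _c : Fin 4, 3 :=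
    sum_le_sum fun c _ => card_image_proj_color_class_le hf c
  rw [sum_card_image_fiber_comm] at lower
  simp only [sum_const, card_univ, Fintype.card_fin, smul_eq_mul] at upper
  have : ∑ w : ZMod 7, (if w = 0 then 1 else 2) = 13 := by decide
  omega

theorem stmt15 : Fintype.card DV = 19 ∧ IsTournament Darc ∧ ¬ Colorable Darc 4 :=
  ⟨by decide, isTournament_darc, not_colorable_darc_four⟩
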